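/- arXiv:2105.12352 — 3 statements merged into one kernel-verified Lean document; each statement's English description precedes it below -/
import Mathlib

section
/- For every positive integer x, Φ(x) = (1/2)·∑_{n=1}^{x} μ(n)·⌊x/n⌋² + 1/2, where Φ(x) = ∑_{n=1}^{x} φ(n). -/
/-! Since `∑_{m ≤ k} (2m - 1) = k²`, `∑_{n ≤ x} μ(n) ⌊x/n⌋²` is the summatory function of
the Dirichlet convolution `μ * (2·id - ζ) = 2φ - ε`, where `μ * id = φ` is Möbius inversion of `∑_{d ∣ n} φ d = n`.
Summing `2φ - ε` up to `x ≥ 1` gives `2Φ(x) - 1`. -/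

open Finset ArithmeticFunction
open scoped ArithmeticFunction.Moebius ArithmeticFunction.zeta

namespace ArithmeticFunction

theorem coe_moebius_mul_coe_id_apply {R : Type*} [Ring R] (n : ℕ) :
    ((μ : ArithmeticFunction R) * (ArithmeticFunction.id : ArithmeticFunction ℕ)) n =
      (n.totient : R) := by
  rcases Nat.eq_zero_or_pos n with rfl | hn
  · simp
  have hsum : ∀ m : ℕ, m > 0 → ∑ d ∈ m.divisors, (d.totient : R) = m := fun m _ ↦ by
    rw [← Nat.cast_sum, Nat.sum_totient]
  simpa [mul_apply, intCoe_apply, natCoe_apply] using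
    sum_eq_iff_sum_mul_moebius_eq.mp hsum n hn

variable {R : Type*} [CommRing R]

theorem sum_Ioc_two_mul_sub_one (k : ℕ) : ∑ m ∈ Ioc 0 k, (2 * (m : R) - 1) = k ^ 2 := by
  induction k with
  | zero => simp
  | succ k ih =>
    rw [sum_Ioc_succ_top k.zero_le, ih]
    push_cast
    ring

theorem sum_Ioc_moebius_mul_div_sq {N : ℕ} (hN : 0 < N) :
    ∑ n ∈ Ioc 0 N, (μ n : R) * ((N / n : ℕ) : R) ^ 2 = 2 * ∑ n ∈ Ioc 0 N, (n.totient : R) - 1 := by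
  set g : ArithmeticFunction R := (2 : R) • (ArithmeticFunction.id : ArithmeticFunction ℕ) - ζ
  have hg : ∀ k, ∑ m ∈ Ioc 0 k, g m = k ^ 2 := fun k ↦ by
    rw [← sum_Ioc_two_mul_sub_one k]
    refine sum_congr rfl fun m hm ↦ ?_
    simp [g, sub_eq_add_neg, natCoe_apply, (mem_Ioc.mp hm).1.ne']
  have hμg : ∀ n, ((μ : ArithmeticFunction R) * g) n =
      2 * n.totient - (1 : ArithmeticFunction R) n := by
    intro n
    rw [mul_sub, mul_smul_comm, coe_moebius_mul_coe_zeta, sub_eq_add_neg, add_apply, neg_apply,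
      smul_map, coe_moebius_mul_coe_id_apply, smul_eq_mul, sub_eq_add_neg]
  calc ∑ n ∈ Ioc 0 N, (μ n : R) * ((N / n : ℕ) : R) ^ 2
      = ∑ n ∈ Ioc 0 N, (μ : ArithmeticFunction R) n * ∑ m ∈ Ioc 0 (N / n), g m := by
        simp_rw [hg, intCoe_apply]
    _ = ∑ n ∈ Ioc 0 N, ((μ : ArithmeticFunction R) * g) n := (sum_Ioc_mul_eq_sum_sum _ _ _).symm
    _ = 2 * ∑ n ∈ Ioc 0 N, (n.totient : R) - 1 := by
        have hone : ∑ n ∈ Ioc 0 N, (1 : ArithmeticFunction R) n = 1 := by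
          simp [one_apply, Nat.one_le_iff_ne_zero.mpr hN.ne']
        simp_rw [hμg, sum_sub_distrib, ← mul_sum, hone]

end ArithmeticFunction

theorem stmt_5 (x : ℕ) (hx : 0 < x) :
    ((∑ n ∈ Finset.Icc 1 x, Nat.totient n : ℕ) : ℝ) =
      (1 / 2) * ∑ n ∈ Finset.Icc 1 x,
        (ArithmeticFunction.moebius n : ℝ) * ((x / n : ℕ) : ℝ) ^ 2 + 1 / 2 := by
  have hIcc : Icc 1 x = Ioc 0 x := Icc_add_one_left_eq_Ioc 0 x
  rw [hIcc, sum_Ioc_moebius_mul_div_sq hx]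
  push_cast
  ring
end

section
/- Let x > 1 and let f be a fraction in the Farey sequence of order x other than 1/1 (i.e., f = a/b in lowest terms with 0 ≤ a < b ≤ x). Then the number t of fractions in the Farey sequence of order x (including 0/1) that do not exceed f satisfies t = 1 + ∑_{j=2}^{x} M(⌊x/j⌋)·⌊j·f⌋. -/
open Finset ArithmeticFunction

/-- Mertens function `M(k) = ∑_{i=1}^{k} μ(i)`. -/
def Mertens (k : ℕ) : ℤ := ∑ i ∈ Finset.Icc 1 k, ArithmeticFunction.moebius i

/-- Number of fractions `a/b` in the Farey sequence of order `x` (irreducible,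
`1 ≤ a ≤ b ≤ x`, so excluding `0`) that are `≤ ξ`. -/
noncomputable def fareyCount (x : ℕ) (ξ : ℝ) : ℕ :=
  ((Finset.Icc 1 x ×ˢ Finset.Icc 1 x).filter
    (fun p => p.1 ≤ p.2 ∧ Nat.gcd p.1 p.2 = 1 ∧ (p.1 : ℝ) ≤ ξ * p.2)).card

/-!
Count the pairs `(p, q) ∈ [1, x]²` with `p ≤ ξ q` and `gcd p q = 1`; for `ξ ≤ 1` the condition
`p ≤ q` is automatic. Coprimality is detected by `∑_{d ∣ gcd p q} μ d`. The pairs divisible by `d`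
are `d` times the pairs of `[1, x/d]²`, and those number `∑_{q ≤ x/d} ⌊q ξ⌋`. Exchanging the sums
over `d` and `q` collects the Möbius values into `M ⌊x/q⌋`, and the term `q = 1` vanishes for
`ξ = a/b < 1`.
-/

lemma sum_divisors_moebius (n : ℕ) :
    ∑ d ∈ n.divisors, (moebius d : ℤ) = if n = 1 then 1 else 0 := by
  rw [← coe_mul_zeta_apply, moebius_mul_coe_zeta, one_apply]

lemma card_filter_gcd_eq_one_eq_sum_moebius (x : ℕ) (s : Finset (ℕ × ℕ))
    (hs : ∀ p ∈ s, p.1 ∈ Icc 1 x) :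
    (#(s.filter fun p => Nat.gcd p.1 p.2 = 1) : ℤ) =
      ∑ d ∈ Icc 1 x, moebius d * #(s.filter fun p => d ∣ p.1 ∧ d ∣ p.2) := by
  have hdivisors : ∀ p ∈ s,
      (Nat.gcd p.1 p.2).divisors = (Icc 1 x).filter fun d => d ∣ p.1 ∧ d ∣ p.2 := by
    intro p hp
    obtain ⟨hp1, hpx⟩ := mem_Icc.1 (hs p hp)
    ext d
    simp only [Nat.mem_divisors, Nat.dvd_gcd_iff, mem_filter, mem_Icc]
    constructor
    · rintro ⟨⟨hd1, hd2⟩, -⟩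
      exact ⟨⟨Nat.pos_of_dvd_of_pos hd1 hp1, (Nat.le_of_dvd hp1 hd1).trans hpx⟩, hd1, hd2⟩
    · rintro ⟨-, hd⟩
      exact ⟨hd, (Nat.gcd_pos_of_pos_left _ hp1).ne'⟩
  calc (#(s.filter fun p => Nat.gcd p.1 p.2 = 1) : ℤ)
      = ∑ p ∈ s, ∑ d ∈ (Nat.gcd p.1 p.2).divisors, (moebius d : ℤ) := by
        simp only [sum_divisors_moebius, sum_boole]
    _ = ∑ p ∈ s, ∑ d ∈ Icc 1 x, if d ∣ p.1 ∧ d ∣ p.2 then (moebius d : ℤ) else 0 :=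
        sum_congr rfl fun p hp => by rw [hdivisors p hp, sum_filter]
    _ = ∑ d ∈ Icc 1 x, moebius d * #(s.filter fun p => d ∣ p.1 ∧ d ∣ p.2) := by
        rw [sum_comm]
        refine sum_congr rfl fun d _ => ?_
        rw [← sum_filter, sum_const, nsmul_eq_mul, mul_comm]

lemma card_filter_dvd_Icc_prod_Icc (x d : ℕ) (hd : 0 < d) (P : ℕ × ℕ → Prop) [DecidablePred P]
    (hP : ∀ p q, P (d * p, d * q) ↔ P (p, q)) :
    #((Icc 1 x ×ˢ Icc 1 x).filter fun p => P p ∧ d ∣ p.1 ∧ d ∣ p.2) =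
      #((Icc 1 (x / d) ×ˢ Icc 1 (x / d)).filter P) := by
  have hmem : ∀ e, d * e ∈ Icc 1 x ↔ e ∈ Icc 1 (x / d) := by
    intro e
    rw [mem_Icc, mem_Icc, Nat.le_div_iff_mul_le hd, mul_comm e, Nat.one_le_iff_ne_zero,
      Nat.one_le_iff_ne_zero, mul_ne_zero_iff, and_iff_right hd.ne']
  symm
  apply card_nbij' (fun p => (d * p.1, d * p.2)) (fun p => (p.1 / d, p.2 / d))
  · rintro ⟨p, q⟩ h
    simp only [mem_coe, mem_filter, mem_product, ← hmem, hP] at h ⊢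
    exact ⟨h.1, h.2, dvd_mul_right d p, dvd_mul_right d q⟩
  · rintro ⟨p, q⟩ h
    simp only [mem_coe, mem_filter, mem_product] at h ⊢
    obtain ⟨hpq, hP', ⟨e, rfl⟩, ⟨f, rfl⟩⟩ := h
    simp only [Nat.mul_div_cancel_left _ hd]
    exact ⟨⟨(hmem e).1 hpq.1, (hmem f).1 hpq.2⟩, (hP e f).1 hP'⟩
  · rintro ⟨p, q⟩ -
    exact Prod.ext (Nat.mul_div_cancel_left p hd) (Nat.mul_div_cancel_left q hd)
  · rintro ⟨p, q⟩ h
    obtain ⟨-, -, ⟨e, rfl⟩, ⟨f, rfl⟩⟩ := mem_filter.1 h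
    simp only [Nat.mul_div_cancel_left _ hd]

lemma card_filter_natCast_le_eq_floor {R : Type*} [Semiring R] [LinearOrder R]
    [IsStrictOrderedRing R] [FloorSemiring R] (y : ℕ) (t : R) (ht : t ≤ y) :
    #((Icc 1 y).filter fun p : ℕ => (p : R) ≤ t) = ⌊t⌋₊ := by
  have : (Icc 1 y).filter (fun p : ℕ => (p : R) ≤ t) = Icc 1 ⌊t⌋₊ := by
    ext p
    simp only [mem_filter, mem_Icc]
    constructor
    · rintro ⟨⟨hp, -⟩, hpt⟩
      exact ⟨hp, (Nat.le_floor_iff' (by omega)).2 hpt⟩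
    · rintro ⟨hp, hpt⟩
      exact ⟨⟨hp, hpt.trans (Nat.floor_le_of_le ht)⟩, (Nat.le_floor_iff' (by omega)).1 hpt⟩
  rw [this, Nat.card_Icc, Nat.add_sub_cancel]

lemma card_filter_le_mul_Icc_prod_Icc_eq_sum_floor {R : Type*} [Semiring R] [LinearOrder R]
    [IsStrictOrderedRing R] [FloorSemiring R] (y : ℕ) (ξ : R) (hξ : ξ ≤ 1) :
    #((Icc 1 y ×ˢ Icc 1 y).filter fun p => (p.1 : R) ≤ ξ * p.2) = ∑ q ∈ Icc 1 y, ⌊q * ξ⌋₊ := by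
  rw [card_filter, sum_product_right]
  refine sum_congr rfl fun q hq => ?_
  rw [← card_filter, Nat.cast_comm q ξ]
  refine card_filter_natCast_le_eq_floor y (ξ * q) ?_
  calc ξ * q ≤ q := mul_le_of_le_one_left q.cast_nonneg hξ
    _ ≤ y := by exact_mod_cast (mem_Icc.1 hq).2

lemma sum_Icc_sum_Icc_div_comm {M : Type*} [AddCommMonoid M] (x : ℕ) (f : ℕ → ℕ → M) :
    ∑ d ∈ Icc 1 x, ∑ q ∈ Icc 1 (x / d), f d q = ∑ q ∈ Icc 1 x, ∑ d ∈ Icc 1 (x / q), f d q := by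
  refine sum_comm' fun d q => ?_
  simp only [mem_Icc]
  constructor
  · rintro ⟨⟨hd, -⟩, hq, hqx⟩
    have := (Nat.le_div_iff_mul_le hd).1 hqx
    exact ⟨⟨hd, (Nat.le_div_iff_mul_le hq).2 (by linarith)⟩, hq, by nlinarith⟩
  · rintro ⟨⟨hd, hdx⟩, hq, -⟩
    have := (Nat.le_div_iff_mul_le hq).1 hdx
    exact ⟨⟨hd, by nlinarith⟩, hq, (Nat.le_div_iff_mul_le hd).2 (by linarith)⟩

theorem fareyCount_eq_sum_mertens_mul_floor (x : ℕ) (ξ : ℝ) (hξ : ξ ≤ 1) :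
    (fareyCount x ξ : ℤ) = ∑ j ∈ Icc 1 x, Mertens (x / j) * ⌊(j : ℝ) * ξ⌋₊ := by
  set A := (Icc 1 x ×ˢ Icc 1 x).filter fun p => (p.1 : ℝ) ≤ ξ * p.2
  have hfarey : fareyCount x ξ = #(A.filter fun p => Nat.gcd p.1 p.2 = 1) := by
    rw [fareyCount, filter_filter]
    refine congrArg card (filter_congr fun p _ => ?_)
    have hle : (p.1 : ℝ) ≤ ξ * p.2 → p.1 ≤ p.2 := fun h => by
      exact_mod_cast h.trans (mul_le_of_le_one_left p.2.cast_nonneg hξ)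
    constructor
    · rintro ⟨-, hgcd, h⟩
      exact ⟨h, hgcd⟩
    · rintro ⟨h, hgcd⟩
      exact ⟨hle h, hgcd, h⟩
  have hA : ∀ p ∈ A, p.1 ∈ Icc 1 x := fun p hp => (mem_product.1 (mem_filter.1 hp).1).1
  calc (fareyCount x ξ : ℤ)
      = ∑ d ∈ Icc 1 x, moebius d * #(A.filter fun p => d ∣ p.1 ∧ d ∣ p.2) := by
        rw [hfarey, card_filter_gcd_eq_one_eq_sum_moebius x A hA]
    _ = ∑ d ∈ Icc 1 x, ∑ q ∈ Icc 1 (x / d), moebius d * (⌊(q : ℝ) * ξ⌋₊ : ℤ) := by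
        refine sum_congr rfl fun d hdx => ?_
        have hd : 0 < d := (mem_Icc.1 hdx).1
        rw [filter_filter, card_filter_dvd_Icc_prod_Icc x d hd,
          card_filter_le_mul_Icc_prod_Icc_eq_sum_floor _ ξ hξ, Nat.cast_sum, mul_sum]
        intro p q
        have hd' : (0 : ℝ) < d := by exact_mod_cast hd
        push_cast
        rw [mul_left_comm, mul_le_mul_iff_right₀ hd']
    _ = ∑ j ∈ Icc 1 x, Mertens (x / j) * ⌊(j : ℝ) * ξ⌋₊ := by
        rw [sum_Icc_sum_Icc_div_comm]
        simp only [Mertens, sum_mul]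

theorem stmt_11_general (x a b : ℕ) (hb : 0 < b) (hab : a < b) :
    -- `t` counts the Farey fractions of order `x` (including `0/1`) that are `≤ a/b`
    ((1 + fareyCount x ((a : ℝ) / b) : ℕ) : ℤ) =
      1 + ∑ j ∈ Finset.Icc 2 x, Mertens (x / j) * ⌊(j : ℝ) * ((a : ℝ) / b)⌋ := by
  have hξ : (a : ℝ) / b < 1 := (div_lt_one (by exact_mod_cast hb)).2 (by exact_mod_cast hab)
  rw [Nat.cast_add, Nat.cast_one, fareyCount_eq_sum_mertens_mul_floor x _ hξ.le]
  congr 1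
  rw [← sum_subset (Icc_subset_Icc_left one_le_two) fun j hj hj2 => ?_]
  · refine sum_congr rfl fun j _ => ?_
    rw [Int.natCast_floor_eq_floor (by positivity)]
  · obtain rfl : j = 1 := by simp only [mem_Icc] at hj hj2; omega
    rw [Nat.cast_one, one_mul, Nat.floor_eq_zero.2 hξ, Nat.cast_zero, mul_zero]

theorem stmt_11 (x a b : ℕ) (hx : 1 < x) (hb : 0 < b) (hbx : b ≤ x) (hab : a < b)
    (hgcd : Nat.gcd a b = 1) :
    -- `t` counts the Farey fractions of order `x` (including `0/1`) that are `≤ a/b`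
    ((1 + fareyCount x ((a : ℝ) / b) : ℕ) : ℤ) =
      1 + ∑ j ∈ Finset.Icc 2 x, Mertens (x / j) * ⌊(j : ℝ) * ((a : ℝ) / b)⌋ :=
  stmt_11_general x a b hb hab
end

section
/- For every positive integer x, ∑_{n=1}^{x} M(⌊x/n⌋)·(⌊n/2⌋ − 2⌊n/4⌋) equals n_x − m_x, where m_x is the number of fractions in the Farey sequence of order x that are ≤ 1/4 and n_x the number of Farey fractions in (1/4, 1/2]. -/
open Finset ArithmeticFunction

/-!
Counting the Farey fractions `a/b ≤ 1/k` by denominator gives the arithmetic function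
`F_k(b) = #{1 ≤ a ≤ ⌊b/k⌋ : gcd(a, b) = 1}`. Sorting the `a ≤ ⌊b/k⌋` by `gcd(a, b) = d` and
dividing by `d` shows `ζ * F_k = ⌊·/k⌋`, hence `F_k = μ * ⌊·/k⌋`, and the partial sums of this
Dirichlet convolution up to `x` are `∑_{n ≤ x} ⌊n/k⌋ M(⌊x/n⌋)`. The theorem is the case `k = 2`
minus twice the case `k = 4`.
-/

open scoped ArithmeticFunction.Moebius ArithmeticFunction.zeta

lemma Nat.mul_le_mul_div_iff {d : ℕ} (hd : 0 < d) (a m k : ℕ) :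
    d * a ≤ d * m / k ↔ a ≤ m / k := by
  rw [← Nat.mul_div_mul_left m k hd, mul_comm d k, ← Nat.div_div_eq_div_mul,
    Nat.le_div_iff_mul_le hd, mul_comm]

lemma Nat.le_div_iff_cast_le_one_div_mul (a b k : ℕ) :
    a ≤ b / k ↔ (a : ℝ) ≤ 1 / k * b := by
  rcases k.eq_zero_or_pos with rfl | hk
  · simp only [Nat.div_zero, CharP.cast_eq_zero, div_zero, zero_mul, Nat.cast_nonpos, Nat.le_zero]
  · rw [Nat.le_div_iff_mul_le hk, one_div, inv_mul_eq_div, le_div_iff₀ (by positivity)]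
    exact_mod_cast Iff.rfl

lemma card_filter_gcd_mul_eq (k : ℕ) {d : ℕ} (hd : 0 < d) (m : ℕ) :
    #{a ∈ Ioc 0 (d * m / k) | a.gcd (d * m) = d} = #{a ∈ Ioc 0 (m / k) | a.Coprime m} := by
  symm
  apply card_nbij' (d * ·) (· / d)
  · intro a
    simp only [coe_filter, mem_Ioc, Set.mem_ofPred_eq, Nat.gcd_mul_left, Nat.Coprime]
    rintro ⟨⟨ha, hak⟩, hcop⟩
    exact ⟨⟨by positivity, (Nat.mul_le_mul_div_iff hd a m k).2 hak⟩, by rw [hcop, mul_one]⟩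
  · intro a
    simp only [coe_filter, mem_Ioc, Set.mem_ofPred_eq]
    rintro ⟨⟨ha, hak⟩, hgcd⟩
    obtain ⟨a, rfl⟩ : d ∣ a := hgcd ▸ Nat.gcd_dvd_left _ _
    rw [Nat.gcd_mul_left, Nat.mul_eq_left hd.ne'] at hgcd
    rw [Nat.mul_div_cancel_left a hd]
    exact ⟨⟨Nat.pos_of_mul_pos_left ha, (Nat.mul_le_mul_div_iff hd a m k).1 hak⟩, hgcd⟩
  · intro a _
    exact Nat.mul_div_cancel_left a hd
  · intro a
    simp only [coe_filter, mem_Ioc, Set.mem_ofPred_eq]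
    rintro ⟨-, hgcd⟩
    exact Nat.mul_div_cancel' (hgcd ▸ Nat.gcd_dvd_left _ _)

lemma sum_divisors_card_coprime (k : ℕ) {b : ℕ} (hb : b ≠ 0) :
    ∑ d ∈ b.divisors, #{a ∈ Ioc 0 (d / k) | a.Coprime d} = b / k := by
  calc ∑ d ∈ b.divisors, #{a ∈ Ioc 0 (d / k) | a.Coprime d}
      = ∑ d ∈ b.divisors, #{a ∈ Ioc 0 (b / d / k) | a.Coprime (b / d)} :=
        (Nat.sum_div_divisors b _).symm
    _ = ∑ d ∈ b.divisors, #{a ∈ Ioc 0 (b / k) | a.gcd b = d} := by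
        refine sum_congr rfl fun d hd => ?_
        obtain ⟨m, rfl⟩ := Nat.dvd_of_mem_divisors hd
        have hd0 : 0 < d := Nat.pos_of_mem_divisors hd
        rw [Nat.mul_div_cancel_left m hd0, card_filter_gcd_mul_eq k hd0 m]
    _ = #(Ioc 0 (b / k)) :=
        (card_eq_sum_card_fiberwise fun a _ => Nat.mem_divisors.2 ⟨Nat.gcd_dvd_right a b, hb⟩).symm
    _ = b / k := Nat.card_Ioc 0 _

def fareyCountDenom (k : ℕ) : ArithmeticFunction ℤ :=
  ⟨fun b => #{a ∈ Ioc 0 (b / k) | a.Coprime b}, by simp⟩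

def floorDiv (k : ℕ) : ArithmeticFunction ℤ :=
  ⟨fun n => ((n / k : ℕ) : ℤ), by simp⟩

@[simp]
lemma fareyCountDenom_apply (k b : ℕ) :
    fareyCountDenom k b = #{a ∈ Ioc 0 (b / k) | a.Coprime b} := rfl

@[simp]
lemma floorDiv_apply (k n : ℕ) : floorDiv k n = ((n / k : ℕ) : ℤ) := rfl

lemma coe_zeta_mul_fareyCountDenom (k : ℕ) :
    (ζ : ArithmeticFunction ℤ) * fareyCountDenom k = floorDiv k := by
  ext b
  rcases eq_or_ne b 0 with rfl | hb
  · simp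
  · rw [coe_zeta_mul_apply, floorDiv_apply, ← sum_divisors_card_coprime k hb]
    simp

lemma fareyCountDenom_eq_moebius_mul (k : ℕ) : fareyCountDenom k = μ * floorDiv k := by
  rw [← coe_zeta_mul_fareyCountDenom, ← mul_assoc, moebius_mul_coe_zeta, one_mul]

lemma fareyCount_one_div_eq_sum (x k : ℕ) :
    fareyCount x (1 / k) = ∑ b ∈ Icc 1 x, #{a ∈ Ioc 0 (b / k) | a.Coprime b} := by
  rw [fareyCount, card_filter, sum_product_right]
  refine sum_congr rfl fun b hb => ?_
  rw [← card_filter]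
  congr 1
  ext a
  simp only [mem_filter, mem_Icc, mem_Ioc, Nat.Coprime] at hb ⊢
  constructor
  · rintro ⟨⟨ha, -⟩, -, hcop, hak⟩
    exact ⟨⟨ha, (Nat.le_div_iff_cast_le_one_div_mul a b k).2 hak⟩, hcop⟩
  · rintro ⟨⟨ha, hak⟩, hcop⟩
    have hab : a ≤ b := hak.trans (Nat.div_le_self b k)
    exact ⟨⟨ha, hab.trans hb.2⟩, hab, hcop, (Nat.le_div_iff_cast_le_one_div_mul a b k).1 hak⟩

lemma sum_mertens_mul (f : ArithmeticFunction ℤ) (x : ℕ) :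
    ∑ n ∈ Icc 1 x, Mertens (x / n) * f n = ∑ n ∈ Icc 1 x, (f * μ) n := by
  have hIcc : ∀ N, Icc 1 N = Ioc 0 N := fun N => Icc_add_one_left_eq_Ioc 0 N
  simp only [Mertens, hIcc, sum_Ioc_mul_eq_sum_sum]
  exact sum_congr rfl fun n _ => mul_comm _ _

lemma fareyCount_one_div_eq_sum_mertens (x k : ℕ) :
    (fareyCount x (1 / k) : ℤ) = ∑ n ∈ Icc 1 x, Mertens (x / n) * ((n / k : ℕ) : ℤ) :=
  calc (fareyCount x (1 / k) : ℤ) = ∑ b ∈ Icc 1 x, fareyCountDenom k b := by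
        rw [fareyCount_one_div_eq_sum]
        push_cast
        rfl
    _ = ∑ n ∈ Icc 1 x, (floorDiv k * μ) n := by
        rw [fareyCountDenom_eq_moebius_mul, mul_comm]
    _ = ∑ n ∈ Icc 1 x, Mertens (x / n) * ((n / k : ℕ) : ℤ) :=
        (sum_mertens_mul (floorDiv k) x).symm

theorem stmt_14_general (x : ℕ) :
    ∑ n ∈ Finset.Icc 1 x, Mertens (x / n) * (((n / 2 : ℕ) : ℤ) - 2 * ((n / 4 : ℕ) : ℤ)) =
      -- `n_x - m_x` where `m_x = fareyCount x (1/4)` and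
      -- `n_x = fareyCount x (1/2) - fareyCount x (1/4)`
      ((fareyCount x (1 / 2) : ℤ) - (fareyCount x (1 / 4) : ℤ)) -
        (fareyCount x (1 / 4) : ℤ) := by
  have h2 := fareyCount_one_div_eq_sum_mertens x 2
  have h4 := fareyCount_one_div_eq_sum_mertens x 4
  simp only [Nat.cast_ofNat] at h2 h4
  rw [h2, h4]
  simp only [mul_sub, sum_sub_distrib, mul_left_comm _ (2 : ℤ), ← mul_sum]
  ring

theorem stmt_14 (x : ℕ) (hx : 0 < x) :
    ∑ n ∈ Finset.Icc 1 x, Mertens (x / n) * (((n / 2 : ℕ) : ℤ) - 2 * ((n / 4 : ℕ) : ℤ)) =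
      -- `n_x - m_x` where `m_x = fareyCount x (1/4)` and
      -- `n_x = fareyCount x (1/2) - fareyCount x (1/4)`
      ((fareyCount x (1 / 2) : ℤ) - (fareyCount x (1 / 4) : ℤ)) -
        (fareyCount x (1 / 4) : ℤ) :=
  stmt_14_general x
end
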